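/- Let n ≥ 1, c ∈ (0,1), ℓ ≥ 1, and λ ≥ 1. Suppose x, x' ∈ {0,1}^n, and there is a position j with x'_j = z_j and x_j ≠ z_j, and x' differs from x in exactly ℓ positions. Let y be obtained from x by independently, for each position i, taking yᵢ = x'ᵢ with probability c and yᵢ = xᵢ otherwise; repeat independently λ times and take the best. Then the probability that some trial yields OM_z(y) > OM_z(x) is at least 1 - (1 - c(1-c)^{ℓ-1})^λ. -/

import Mathlib

open Finset MeasureTheory

/-- The generalized OneMax function with target string `z`. -/
def oneMax {n : ℕ} (z x : Fin n → Bool) : ℕ :=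
  #{i : Fin n | x i = z i}

/-- Biased crossover: with coin vector `b`, take `x'ᵢ` where `bᵢ = true` and `xᵢ`
otherwise. -/
def cross {n : ℕ} (x x' : Fin n → Bool) (b : Fin n → Bool) : Fin n → Bool :=
  fun i => if b i then x' i else x i

/-! An offspring improves on `x` as soon as it takes the good bit `j` from `x'` and keeps `x`
at the other `ℓ - 1` positions where `x` and `x'` differ. Under the product Bernoulli measure
this cylinder event has probability `c (1 - c) ^ (ℓ - 1)`, and the `λ` offspring are independent,
so all of them fail with probability at most `(1 - c (1 - c) ^ (ℓ - 1)) ^ λ`. -/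

section Trials

variable {ι α : Type*} [Fintype ι] [MeasurableSpace α] (μ : Measure α) [IsProbabilityMeasure μ]

theorem measure_pi_exists_mem {A : Set α} (hA : MeasurableSet A) :
    Measure.pi (fun _ : ι => μ) {ω | ∃ i, ω i ∈ A} = 1 - (1 - μ A) ^ Fintype.card ι := by
  have hcompl : {ω : ι → α | ∃ i, ω i ∈ A}ᶜ = Set.univ.pi fun _ => Aᶜ := by
    ext ω
    simp
  have hmeas : MeasurableSet {ω : ι → α | ∃ i, ω i ∈ A} := by
    simp only [Set.ofPred_exists]
    exact MeasurableSet.iUnion fun i => measurable_pi_apply i hA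
  rw [← compl_compl {ω : ι → α | ∃ i, ω i ∈ A}, prob_compl_eq_one_sub hmeas.compl, hcompl,
    Measure.pi_pi, prod_const, card_univ, prob_compl_eq_one_sub hA]

theorem measure_pi_setOf_mem_and_forall_mem [DecidableEq ι] {j : ι} {T : Finset ι} (hj : j ∉ T)
    (s t : Set α) :
    Measure.pi (fun _ : ι => μ) {ω | ω j ∈ s ∧ ∀ i ∈ T, ω i ∈ t} = μ s * μ t ^ #T := by
  have hset : {ω : ι → α | ω j ∈ s ∧ ∀ i ∈ T, ω i ∈ t} =
      Set.univ.pi fun i => if i = j then s else if i ∈ T then t else Set.univ := by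
    ext ω
    simp only [Set.mem_ofPred_eq, Set.mem_univ_pi]
    constructor
    · rintro ⟨hs, ht⟩ i
      split_ifs with hij hiT
      · exact hij ▸ hs
      · exact ht i hiT
      · trivial
    · intro h
      refine ⟨by simpa using h j, fun i hi => ?_⟩
      have hij : i ≠ j := fun h' => hj (h' ▸ hi)
      simpa [hij, hi] using h i
  rw [hset, Measure.pi_pi, prod_eq_mul_prod_sdiff_singleton_of_mem (mem_univ j)]
  simp only [apply_ite μ, measure_univ, if_true]
  have hT : (univ \ {j}) ∩ T = T :=
    inter_eq_right.2 fun i hi => mem_sdiff.2 ⟨mem_univ i, fun h => hj (mem_singleton.1 h ▸ hi)⟩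
  rw [prod_congr rfl fun i hi => if_neg (by simpa using hi), prod_ite_mem, hT, prod_const]

end Trials

theorem ENNReal.ofReal_one_sub_one_sub_pow_le {p : ℝ} {q : ENNReal} (hp0 : 0 ≤ p) (hp1 : p ≤ 1)
    (hpq : ENNReal.ofReal p ≤ q) (k : ℕ) :
    ENNReal.ofReal (1 - (1 - p) ^ k) ≤ 1 - (1 - q) ^ k := by
  rw [ENNReal.ofReal_sub _ (pow_nonneg (sub_nonneg.2 hp1) k), ENNReal.ofReal_one,
    ENNReal.ofReal_pow (sub_nonneg.2 hp1), ENNReal.ofReal_sub _ hp0, ENNReal.ofReal_one]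
  gcongr

theorem PMF.toMeasure_bernoulli_true (p : NNReal) (h : p ≤ 1) :
    (PMF.bernoulli p h).toMeasure {true} = p := by
  rw [PMF.toMeasure_apply_singleton _ _ (measurableSet_singleton _), PMF.bernoulli_apply,
    cond_true]

theorem PMF.toMeasure_bernoulli_false (p : NNReal) (h : p ≤ 1) :
    (PMF.bernoulli p h).toMeasure {false} = 1 - p := by
  rw [PMF.toMeasure_apply_singleton _ _ (measurableSet_singleton _), PMF.bernoulli_apply,
    cond_false, ENNReal.coe_sub, ENNReal.coe_one]

theorem oneMax_lt_oneMax {n : ℕ} {z x y : Fin n → Bool} (hxy : ∀ i, x i = z i → y i = z i)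
    {j : Fin n} (hyj : y j = z j) (hxj : x j ≠ z j) : oneMax z x < oneMax z y := by
  refine card_lt_card ((ssubset_iff_of_subset ?_).2 ⟨j, ?_, ?_⟩) <;> simp_all [subset_iff]

theorem oneMax_lt_oneMax_cross {n : ℕ} {z x x' b : Fin n → Bool} {j : Fin n}
    (hx'j : x' j = z j) (hxj : x j ≠ z j) (hbj : b j = true)
    (hb : ∀ i ∈ ({i | x i ≠ x' i} : Finset (Fin n)).erase j, b i = false) :
    oneMax z x < oneMax z (cross x x' b) := by
  refine oneMax_lt_oneMax (fun i hi => ?_) (by simp [cross, hbj, hx'j]) hxj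
  by_cases hx : x i = x' i
  · simp [cross, ← hx, hi]
  · have hij : i ≠ j := by rintro rfl; exact hxj hi
    simp [cross, hb i (by simp [hij, hx]), hi]

theorem ofReal_le_measure_pi_oneMax_lt_cross {n ℓ : ℕ} {z x x' : Fin n → Bool} {c : ℝ}
    (hc0 : 0 ≤ c) (hc1 : c ≤ 1) (hdiff : hammingDist x x' = ℓ) {j : Fin n}
    (hx'j : x' j = z j) (hxj : x j ≠ z j) :
    ENNReal.ofReal (c * (1 - c) ^ (ℓ - 1)) ≤
      Measure.pi (fun _ : Fin n => (PMF.bernoulli (Real.toNNReal c)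
        (Real.toNNReal_le_one.mpr hc1)).toMeasure)
        {b | oneMax z x < oneMax z (cross x x' b)} := by
  set μ := (PMF.bernoulli (Real.toNNReal c) (Real.toNNReal_le_one.mpr hc1)).toMeasure
  set D : Finset (Fin n) := {i | x i ≠ x' i}
  have hjD : j ∈ D := by
    simp only [D, mem_filter, mem_univ, true_and]
    exact fun h => hxj (h ▸ hx'j)
  have hD : #(D.erase j) = ℓ - 1 := by rw [card_erase_of_mem hjD, ← hdiff]; rfl
  calc ENNReal.ofReal (c * (1 - c) ^ (ℓ - 1)) = μ {true} * μ {false} ^ #(D.erase j) := by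
        rw [PMF.toMeasure_bernoulli_true, PMF.toMeasure_bernoulli_false, hD,
          ENNReal.ofReal_mul hc0, ENNReal.ofReal_pow (by linarith), ENNReal.ofReal_sub _ hc0,
          ENNReal.ofReal_one]
        rfl
    _ = Measure.pi (fun _ => μ)
          {b | b j ∈ ({true} : Set Bool) ∧ ∀ i ∈ D.erase j, b i ∈ ({false} : Set Bool)} :=
      (measure_pi_setOf_mem_and_forall_mem μ (notMem_erase j D) _ _).symm
    _ ≤ _ := measure_mono fun b hb => oneMax_lt_oneMax_cross hx'j hxj hb.1 fun i hi => hb.2 i hi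

theorem stmt_14_general {n : ℕ} (z x x' : Fin n → Bool) (c : ℝ)
    (hc0 : 0 < c) (hc1 : c < 1) (ℓ lam : ℕ)
    (hdiff : hammingDist x x' = ℓ)
    (hgood : ∃ j, x' j = z j ∧ x j ≠ z j) :
    ENNReal.ofReal (1 - (1 - c * (1 - c) ^ (ℓ - 1)) ^ lam) ≤
      (Measure.pi fun _ : Fin lam =>
          Measure.pi fun _ : Fin n =>
            (PMF.bernoulli (Real.toNNReal c)
              (Real.toNNReal_le_one.mpr hc1.le)).toMeasure)
        {ω | ∃ k : Fin lam, oneMax z x < oneMax z (cross x x' (ω k))} := by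
  obtain ⟨j, hx'j, hxj⟩ := hgood
  have hp1 : c * (1 - c) ^ (ℓ - 1) ≤ 1 :=
    mul_le_one₀ hc1.le (by positivity) (pow_le_one₀ (by linarith) (by linarith))
  have htrials := measure_pi_exists_mem (ι := Fin lam)
    (Measure.pi fun _ : Fin n => (PMF.bernoulli (Real.toNNReal c)
      (Real.toNNReal_le_one.mpr hc1.le)).toMeasure)
    (A := {b | oneMax z x < oneMax z (cross x x' b)}) .of_discrete
  rw [Fintype.card_fin] at htrials
  exact (ENNReal.ofReal_one_sub_one_sub_pow_le (by positivity) hp1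
    (ofReal_le_measure_pi_oneMax_lt_cross hc0.le hc1.le hdiff hx'j hxj) lam).trans htrials.ge

/-- Success probability of the crossover phase (Lemma 6 of [DoerrDE15]): if `x'`
differs from `x` in exactly `ℓ` positions and at one of them agrees with `z` while
`x` does not, then `λ` independent crossovers `cross_c(x,x')` (each position taken
from `x'` independently with probability `c`) produce an offspring strictly better
than `x` with probability at least `1 - (1 - c(1-c)^{ℓ-1})^λ`. -/
theorem stmt_14 {n : ℕ} (hn : 1 ≤ n) (z x x' : Fin n → Bool) (c : ℝ)
    (hc0 : 0 < c) (hc1 : c < 1) (ℓ lam : ℕ) (hℓ : 1 ≤ ℓ) (hlam : 1 ≤ lam)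
    (hdiff : hammingDist x x' = ℓ)
    (hgood : ∃ j, x' j = z j ∧ x j ≠ z j) :
    ENNReal.ofReal (1 - (1 - c * (1 - c) ^ (ℓ - 1)) ^ lam) ≤
      (Measure.pi fun _ : Fin lam =>
          Measure.pi fun _ : Fin n =>
            (PMF.bernoulli (Real.toNNReal c)
              (Real.toNNReal_le_one.mpr hc1.le)).toMeasure)
        {ω | ∃ k : Fin lam, oneMax z x < oneMax z (cross x x' (ω k))} :=
  stmt_14_general z x x' c hc0 hc1 ℓ lam hdiff hgood
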